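/- arXiv:0801.4548 — 5 statements merged into one kernel-verified Lean document; each statement's English description precedes it below -/
import Mathlib

section
/- Let 1 ≤ m < n be integers and define f_0 : ℝ^n → ℝ^n by f_0(x) := (x_1 − x_{m+1}, …, x_m − x_{m+1}, 0, …, 0). Let ε ∈ {±1}^n, let σ be a permutation of {1, …, n}, and let g·x denote the vector with (g·x)_i := ε_i x_{σ^{-1}(i)}. If x ∈ ℝ^n satisfies x_1 ≥ ⋯ ≥ x_n ≥ 0 and the vector g·x also satisfies (g·x)_1 ≥ ⋯ ≥ (g·x)_n ≥ 0, then f_0(g·x) = g·f_0(x). -/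
/-! Since `x ≥ 0` and `g • x ≥ 0`, every sign `ε_i = -1` meets a zero coordinate, so `g • x` is just
the rearrangement `x ∘ σ⁻¹`. A tuple has only one antitone rearrangement, hence `g • x = x`. On `Λ_n`,
`f₀` acts coordinatewise as `t ↦ max (t - x_{m+1}) 0`, a map fixing `0`, so `g` also fixes `f₀ x`. -/

section SignedPerm

variable {α : Type*} [Ring α] [LinearOrder α] [IsStrictOrderedRing α] {ε a : α}

theorem mul_eq_self_of_mul_nonneg (hε : ε = 1 ∨ ε = -1) (ha : 0 ≤ a) (h : 0 ≤ ε * a) :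
    ε * a = a := by
  rcases hε with rfl | rfl
  · exact one_mul a
  · have : a = 0 := le_antisymm (by simpa using h) ha
    simp [this]

theorem mul_apply_eq_apply_of_mul_eq_self (hε : ε = 1 ∨ ε = -1) (h : ε * a = a)
    {φ : α → α} (hφ : φ 0 = 0) : ε * φ a = φ a := by
  rcases hε with rfl | rfl
  · exact one_mul _
  · have : a = 0 := by rw [neg_one_mul, neg_eq_iff_add_eq_zero] at h; simpa using h
    simp [this, hφ]

end SignedPerm

theorem ite_lt_sub_eq_max_sub_of_antitone {ι α : Type*} [LinearOrder ι] [AddCommGroup α]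
    [LinearOrder α] [IsOrderedAddMonoid α] {x : ι → α} (hx : Antitone x) (i M : ι) :
    (if i < M then x i - x M else 0) = max (x i - x M) 0 := by
  split_ifs with h
  · exact (max_eq_left (sub_nonneg.2 (hx h.le))).symm
  · exact (max_eq_right (sub_nonpos.2 (hx (not_lt.1 h)))).symm

theorem f0_signed_perm_equivariant_general (m n : ℕ) (hmn : m < n)
    (f0 : (Fin n → ℝ) → (Fin n → ℝ))
    (hf0 : ∀ (x : Fin n → ℝ) (i : Fin n),
      f0 x i = if (i : ℕ) < m then x i - x ⟨m, hmn⟩ else 0)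
    (ε : Fin n → ℝ) (hε : ∀ i, ε i = 1 ∨ ε i = -1)
    (σ : Equiv.Perm (Fin n)) (x : Fin n → ℝ)
    (hx1 : ∀ i j : Fin n, i ≤ j → x j ≤ x i) (hx2 : ∀ i, 0 ≤ x i)
    (hg1 : ∀ i j : Fin n, i ≤ j → ε j * x (σ.symm j) ≤ ε i * x (σ.symm i))
    (hg2 : ∀ i, 0 ≤ ε i * x (σ.symm i)) :
    f0 (fun i => ε i * x (σ.symm i)) = fun i => ε i * f0 x (σ.symm i) := by
  set M : Fin n := ⟨m, hmn⟩
  have hx : Antitone x := hx1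
  have hsign (i : Fin n) : ε i * x (σ.symm i) = x (σ.symm i) :=
    mul_eq_self_of_mul_nonneg (hε i) (hx2 _) (hg2 i)
  have hperm (i : Fin n) : x (σ.symm i) = x i :=
    congrFun (Tuple.unique_antitone (τ := 1)
      (fun i j h => by simpa only [Function.comp_apply, hsign] using hg1 i j h) hx) i
  have hf0x : f0 x = fun i => max (x i - x M) 0 :=
    funext fun i => (hf0 x i).trans (ite_lt_sub_eq_max_sub_of_antitone hx i M)
  simp only [hsign]
  rw [show (fun i => x (σ.symm i)) = x from funext hperm, hf0x]
  funext i
  rw [mul_apply_eq_apply_of_mul_eq_self (φ := fun t => max (t - x M) 0) (hε i) (hsign i)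
    (max_eq_right (by linarith [hx2 M])), hperm]

/-- Lemma 3.2: For `x ∈ Λ_n` and a signed permutation `g = (ε, σ)` (acting by
`(g·x)_i = ε_i x_{σ⁻¹(i)}`) with `g·x ∈ Λ_n`, we have `f₀(g·x) = g·f₀(x)`. -/
theorem f0_signed_perm_equivariant (m n : ℕ) (hm : 1 ≤ m) (hmn : m < n)
    (f0 : (Fin n → ℝ) → (Fin n → ℝ))
    (hf0 : ∀ (x : Fin n → ℝ) (i : Fin n),
      f0 x i = if (i : ℕ) < m then x i - x ⟨m, hmn⟩ else 0)
    (ε : Fin n → ℝ) (hε : ∀ i, ε i = 1 ∨ ε i = -1)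
    (σ : Equiv.Perm (Fin n)) (x : Fin n → ℝ)
    (hx1 : ∀ i j : Fin n, i ≤ j → x j ≤ x i) (hx2 : ∀ i, 0 ≤ x i)
    (hg1 : ∀ i j : Fin n, i ≤ j → ε j * x (σ.symm j) ≤ ε i * x (σ.symm i))
    (hg2 : ∀ i, 0 ≤ ε i * x (σ.symm i)) :
    f0 (fun i => ε i * x (σ.symm i)) = fun i => ε i * f0 x (σ.symm i) :=
  f0_signed_perm_equivariant_general m n hmn f0 hf0 ε hε σ x hx1 hx2 hg1 hg2
end

section
/- Let 1 ≤ m < n be integers and define f_0 : ℝ^n → ℝ^n by f_0(x) := (x_1 − x_{m+1}, …, x_m − x_{m+1}, 0, …, 0). Then: (i) for every x ∈ ℝ^n there exists a signed permutation g (i.e. g acting by (g·x)_i := ε_i x_{σ^{-1}(i)} with ε ∈ {±1}^n and σ a permutation of {1, …, n}) such that g·x satisfies (g·x)_1 ≥ ⋯ ≥ (g·x)_n ≥ 0; and (ii) if g and g' are two signed permutations with both g·x and g'·x satisfying this monotonicity condition, then g^{-1}·f_0(g·x) = g'^{-1}·f_0(g'·x). -/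
/-!
If `ε_i = ±1` and `ε_i x_{σ⁻¹ i} ≥ 0`, then `ε_i x_{σ⁻¹ i} = |x_{σ⁻¹ i}|`, so a signed permutation
`g` with `g·x ∈ Λ_n` sorts `|x|` decreasingly, and the sorted vector (in particular its entry
`t := (g·x)_{m+1}`) is the same for every such `g`. Undoing `g` coordinatewise, `g⁻¹·f₀(g·x)` is
the soft thresholding of `x` at level `t`, a formula in which neither `ε` nor `σ` appears.
-/

open Equiv

def softThreshold (t a : ℝ) : ℝ := a - max (-t) (min t a)

lemma softThreshold_eq_zero_of_abs_le {t a : ℝ} (h : |a| ≤ t) : softThreshold t a = 0 := by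
  obtain ⟨h₁, h₂⟩ := abs_le.1 h
  rw [softThreshold, min_eq_right h₂, max_eq_right h₁, sub_self]

lemma softThreshold_eq_of_le_abs {t a e : ℝ} (ht : 0 ≤ t) (h : t ≤ |a|)
    (he : e = 1 ∨ e = -1) (hea : e * a = |a|) : softThreshold t a = e * (|a| - t) := by
  rcases he with rfl | rfl
  · have ha : t ≤ a := by linarith
    rw [softThreshold, min_eq_left ha, max_eq_right (by linarith)]
    linarith
  · have ha : a ≤ -t := by linarith
    rw [softThreshold, min_eq_right (by linarith), max_eq_left ha]
    linarith

lemma mul_eq_abs_of_nonneg {e a : ℝ} (he : e = 1 ∨ e = -1) (h : 0 ≤ e * a) : e * a = |a| := by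
  rcases he with rfl | rfl
  · rw [one_mul] at h ⊢
    exact (abs_of_nonneg h).symm
  · rw [abs_of_nonpos (by linarith)]
    ring

lemma exists_perm_antitone_comp {α : Type*} [LinearOrder α] {n : ℕ} (f : Fin n → α) :
    ∃ σ : Perm (Fin n), Antitone (f ∘ σ) :=
  ⟨Tuple.sort (OrderDual.toDual ∘ f), monotone_toDual_comp_iff.1 (Tuple.monotone_sort _)⟩

section SignedPerm

variable {n : ℕ} {x ε : Fin n → ℝ} {σ : Perm (Fin n)}

lemma mul_apply_symm_eq_abs (hε : ∀ i, ε i = 1 ∨ ε i = -1)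
    (hpos : ∀ i, 0 ≤ ε i * x (σ.symm i)) (i : Fin n) : ε i * x (σ.symm i) = |x (σ.symm i)| :=
  mul_eq_abs_of_nonneg (hε i) (hpos i)

lemma antitone_abs_comp_symm (hε : ∀ i, ε i = 1 ∨ ε i = -1)
    (hmono : ∀ i j : Fin n, i ≤ j → ε j * x (σ.symm j) ≤ ε i * x (σ.symm i))
    (hpos : ∀ i, 0 ≤ ε i * x (σ.symm i)) : Antitone ((fun i => |x i|) ∘ σ.symm) := by
  intro i j hij
  simpa only [Function.comp_apply, mul_apply_symm_eq_abs hε hpos] using hmono i j hij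

lemma exists_signed_perm_sorted (x : Fin n → ℝ) :
    ∃ (ε : Fin n → ℝ) (σ : Perm (Fin n)), (∀ i, ε i = 1 ∨ ε i = -1) ∧
      (∀ i j : Fin n, i ≤ j → ε j * x (σ.symm j) ≤ ε i * x (σ.symm i)) ∧
      (∀ i, 0 ≤ ε i * x (σ.symm i)) := by
  obtain ⟨τ, hτ⟩ := exists_perm_antitone_comp fun i => |x i|
  have habs : ∀ j, (if x (τ j) < 0 then -1 else 1) * x (τ j) = |x (τ j)| := by
    intro j
    split_ifs with h
    · rw [abs_of_neg h, neg_one_mul]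
    · rw [abs_of_nonneg (not_lt.1 h), one_mul]
  refine ⟨fun j => if x (τ j) < 0 then -1 else 1, τ⁻¹, fun i => ?_, fun i j hij => ?_, fun i => ?_⟩
  · dsimp only
    split_ifs <;> simp
  · rw [Perm.inv_def, symm_symm, habs, habs]
    exact hτ hij
  · simpa only [Perm.inv_def, symm_symm, habs] using abs_nonneg (x (τ i))

lemma apply_mul_f0_eq_softThreshold {m : ℕ} (hmn : m < n)
    {f0 : (Fin n → ℝ) → (Fin n → ℝ)}
    (hf0 : ∀ (x : Fin n → ℝ) (i : Fin n),
      f0 x i = if (i : ℕ) < m then x i - x ⟨m, hmn⟩ else 0)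
    (hε : ∀ i, ε i = 1 ∨ ε i = -1)
    (hmono : ∀ i j : Fin n, i ≤ j → ε j * x (σ.symm j) ≤ ε i * x (σ.symm i))
    (hpos : ∀ i, 0 ≤ ε i * x (σ.symm i)) (i : Fin n) :
    ε (σ i) * f0 (fun j => ε j * x (σ.symm j)) (σ i) =
      softThreshold |x (σ.symm ⟨m, hmn⟩)| (x i) := by
  have hanti := antitone_abs_comp_symm hε hmono hpos
  have hxi : ε (σ i) * x i = |x i| := by
    simpa only [symm_apply_apply] using mul_apply_symm_eq_abs hε hpos (σ i)
  rw [hf0, mul_apply_symm_eq_abs hε hpos, mul_apply_symm_eq_abs hε hpos, symm_apply_apply]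
  split_ifs with hlt
  · have hle : |x (σ.symm ⟨m, hmn⟩)| ≤ |x i| := by
      simpa only [Function.comp_apply, symm_apply_apply] using
        hanti (show σ i ≤ ⟨m, hmn⟩ from Fin.le_def.2 hlt.le)
    exact (softThreshold_eq_of_le_abs (abs_nonneg _) hle (hε _) hxi).symm
  · have hle : |x i| ≤ |x (σ.symm ⟨m, hmn⟩)| := by
      simpa only [Function.comp_apply, symm_apply_apply] using
        hanti (show (⟨m, hmn⟩ : Fin n) ≤ σ i from Fin.le_def.2 (not_lt.1 hlt))
    rw [mul_zero, softThreshold_eq_zero_of_abs_le hle]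

end SignedPerm

theorem f0_well_defined_general (m n : ℕ) (hmn : m < n)
    (f0 : (Fin n → ℝ) → (Fin n → ℝ))
    (hf0 : ∀ (x : Fin n → ℝ) (i : Fin n),
      f0 x i = if (i : ℕ) < m then x i - x ⟨m, hmn⟩ else 0) :
    (∀ x : Fin n → ℝ, ∃ (ε : Fin n → ℝ) (σ : Equiv.Perm (Fin n)),
      (∀ i, ε i = 1 ∨ ε i = -1) ∧
      (∀ i j : Fin n, i ≤ j → ε j * x (σ.symm j) ≤ ε i * x (σ.symm i)) ∧
      (∀ i, 0 ≤ ε i * x (σ.symm i))) ∧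
    (∀ (x : Fin n → ℝ) (ε ε' : Fin n → ℝ) (σ σ' : Equiv.Perm (Fin n)),
      (∀ i, ε i = 1 ∨ ε i = -1) → (∀ i, ε' i = 1 ∨ ε' i = -1) →
      (∀ i j : Fin n, i ≤ j → ε j * x (σ.symm j) ≤ ε i * x (σ.symm i)) →
      (∀ i, 0 ≤ ε i * x (σ.symm i)) →
      (∀ i j : Fin n, i ≤ j → ε' j * x (σ'.symm j) ≤ ε' i * x (σ'.symm i)) →
      (∀ i, 0 ≤ ε' i * x (σ'.symm i)) →
      (fun i => ε (σ i) * f0 (fun j => ε j * x (σ.symm j)) (σ i)) =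
      (fun i => ε' (σ' i) * f0 (fun j => ε' j * x (σ'.symm j)) (σ' i))) := by
  refine ⟨exists_signed_perm_sorted, fun x ε ε' σ σ' hε hε' hmono hpos hmono' hpos' => ?_⟩
  have hsorted : (fun i => |x i|) ∘ σ.symm = (fun i => |x i|) ∘ σ'.symm :=
    Tuple.unique_antitone (antitone_abs_comp_symm hε hmono hpos)
      (antitone_abs_comp_symm hε' hmono' hpos')
  have hthreshold : |x (σ.symm ⟨m, hmn⟩)| = |x (σ'.symm ⟨m, hmn⟩)| := congrFun hsorted _
  funext i
  rw [apply_mul_f0_eq_softThreshold hmn hf0 hε hmono hpos,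
    apply_mul_f0_eq_softThreshold hmn hf0 hε' hmono' hpos', hthreshold]

/-- (i) Every `x ∈ ℝ^n` can be brought into `Λ_n` by a signed permutation `g = (ε, σ)`
(acting by `(g·x)_i = ε_i x_{σ⁻¹(i)}`, so that `(g⁻¹·y)_i = ε_{σ(i)} y_{σ(i)}`), and
(ii) the resulting vector `g⁻¹·f₀(g·x)` does not depend on the choice of `g`. -/
theorem f0_well_defined (m n : ℕ) (hm : 1 ≤ m) (hmn : m < n)
    (f0 : (Fin n → ℝ) → (Fin n → ℝ))
    (hf0 : ∀ (x : Fin n → ℝ) (i : Fin n),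
      f0 x i = if (i : ℕ) < m then x i - x ⟨m, hmn⟩ else 0) :
    (∀ x : Fin n → ℝ, ∃ (ε : Fin n → ℝ) (σ : Equiv.Perm (Fin n)),
      (∀ i, ε i = 1 ∨ ε i = -1) ∧
      (∀ i j : Fin n, i ≤ j → ε j * x (σ.symm j) ≤ ε i * x (σ.symm i)) ∧
      (∀ i, 0 ≤ ε i * x (σ.symm i))) ∧
    (∀ (x : Fin n → ℝ) (ε ε' : Fin n → ℝ) (σ σ' : Equiv.Perm (Fin n)),
      (∀ i, ε i = 1 ∨ ε i = -1) → (∀ i, ε' i = 1 ∨ ε' i = -1) →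
      (∀ i j : Fin n, i ≤ j → ε j * x (σ.symm j) ≤ ε i * x (σ.symm i)) →
      (∀ i, 0 ≤ ε i * x (σ.symm i)) →
      (∀ i j : Fin n, i ≤ j → ε' j * x (σ'.symm j) ≤ ε' i * x (σ'.symm i)) →
      (∀ i, 0 ≤ ε' i * x (σ'.symm i)) →
      (fun i => ε (σ i) * f0 (fun j => ε j * x (σ.symm j)) (σ i)) =
      (fun i => ε' (σ' i) * f0 (fun j => ε' j * x (σ'.symm j)) (σ' i))) :=
  f0_well_defined_general m n hmn f0 hf0
end

section
/- Let 1 ≤ p ≤ q < ∞ be real numbers and 1 ≤ m < n integers. Let x ∈ ℝ^n satisfy x_1 ≥ x_2 ≥ ⋯ ≥ x_n ≥ 0 and x_1^p + ⋯ + x_n^p ≤ 1, and set t := x_{m+1}^p. Then x_{m+2}^q + x_{m+3}^q + ⋯ + x_n^q ≤ (1 − (m+1)·t) · t^{q/p − 1}. -/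
/-!
Every entry of the tail is at most `s := x_{m+1}`, so `x_i^q ≤ x_i^p s^(q-p)` and the tail
`q`-sum is at most the tail `p`-sum times `s^(q-p) = t^(q/p-1)`. Each of the first `m + 1`
entries is at least `s`, so they use up at least `(m + 1) t` of the unit `p`-budget, which leaves
at most `1 - (m + 1) t` for the tail.
-/

open Finset

theorem Real.rpow_le_rpow_mul_rpow_sub {y z p q : ℝ} (hy : 0 ≤ y) (hyz : y ≤ z) (hpq : p ≤ q)
    (hq : q ≠ 0) : y ^ q ≤ y ^ p * z ^ (q - p) :=
  calc y ^ q = y ^ p * y ^ (q - p) := by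
        rw [← Real.rpow_add' hy (by simpa using hq), add_sub_cancel]
    _ ≤ y ^ p * z ^ (q - p) := by gcongr

theorem Finset.sum_rpow_le_sum_rpow_mul {ι : Type*} (s : Finset ι) (f : ι → ℝ) {c p q : ℝ}
    (hf : ∀ i ∈ s, 0 ≤ f i ∧ f i ≤ c) (hpq : p ≤ q) (hq : q ≠ 0) :
    ∑ i ∈ s, f i ^ q ≤ (∑ i ∈ s, f i ^ p) * c ^ (q - p) := by
  rw [sum_mul]
  exact sum_le_sum fun i hi => Real.rpow_le_rpow_mul_rpow_sub (hf i hi).1 (hf i hi).2 hpq hq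

theorem Antitone.sum_Ioi_le {n : ℕ} {f : Fin n → ℝ} (hf : Antitone f) (k : Fin n) :
    ∑ i ∈ Ioi k, f i ≤ ∑ i, f i - ((k : ℝ) + 1) * f k := by
  have hhead : ((k : ℝ) + 1) * f k ≤ ∑ i ∈ Iic k, f i := by
    have := card_nsmul_le_sum (Iic k) f (f k) fun i hi => hf (mem_Iic.mp hi)
    simpa [Fin.card_Iic] using this
  have hsplit : ∑ i ∈ Ioi k, f i + ∑ i ∈ Iic k, f i = ∑ i, f i := by
    rw [← filter_lt_eq_Ioi, ← sum_filter_add_sum_filter_not univ (k < ·)]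
    congr 2
    ext i; simp
  linarith

/-- Indices are 0-based: `x ⟨m, hmn⟩` is the informal `x_{m+1}`. -/
theorem tail_sum_rpow_le_general (p q : ℝ) (hp : 1 ≤ p) (hpq : p ≤ q)
    (m n : ℕ) (hmn : m < n)
    (x : Fin n → ℝ)
    (hx1 : ∀ i j : Fin n, i ≤ j → x j ≤ x i) (hx2 : ∀ i, 0 ≤ x i)
    (hsum : ∑ i, x i ^ p ≤ 1) :
    ∑ i ∈ univ.filter (fun i : Fin n => m + 1 ≤ (i : ℕ)), x i ^ q
      ≤ (1 - ((m : ℝ) + 1) * x ⟨m, hmn⟩ ^ p) * (x ⟨m, hmn⟩ ^ p) ^ (q / p - 1) := by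
  set k : Fin n := ⟨m, hmn⟩
  have hp0 : 0 < p := by linarith
  have htail : univ.filter (fun i : Fin n => m + 1 ≤ (i : ℕ)) = Ioi k := by
    ext i; simp [k, Fin.lt_def]
  have hxp : Antitone fun i => x i ^ p := fun i j hij =>
    Real.rpow_le_rpow (hx2 j) (hx1 i j hij) hp0.le
  have hexp : (x k ^ p) ^ (q / p - 1) = x k ^ (q - p) := by
    rw [← Real.rpow_mul (hx2 k)]
    congr 1
    field_simp
  rw [htail, hexp]
  calc ∑ i ∈ Ioi k, x i ^ q ≤ (∑ i ∈ Ioi k, x i ^ p) * x k ^ (q - p) :=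
        sum_rpow_le_sum_rpow_mul _ x
          (fun i hi => ⟨hx2 i, hx1 k i (mem_Ioi.mp hi).le⟩) hpq (by linarith)
    _ ≤ (1 - ((m : ℝ) + 1) * x k ^ p) * x k ^ (q - p) := by
        have htail_p := hxp.sum_Ioi_le k
        exact mul_le_mul_of_nonneg_right (by linarith) (Real.rpow_nonneg (hx2 k) _)

open Finset in
/-- For a sorted vector in the unit `ℓ^p`-ball, with `t := x_{m+1}^p`,
the tail sum satisfies `x_{m+2}^q + ⋯ + x_n^q ≤ (1 - (m+1)t) t^{q/p - 1}`.
(Indices are 1-based in the informal statement; here `x ⟨m, hmn⟩` is `x_{m+1}`.) -/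
theorem tail_sum_rpow_le (p q : ℝ) (hp : 1 ≤ p) (hpq : p ≤ q)
    (m n : ℕ) (hm : 1 ≤ m) (hmn : m < n)
    (x : Fin n → ℝ)
    (hx1 : ∀ i j : Fin n, i ≤ j → x j ≤ x i) (hx2 : ∀ i, 0 ≤ x i)
    (hsum : ∑ i, x i ^ p ≤ 1) :
    ∑ i ∈ univ.filter (fun i : Fin n => m + 1 ≤ (i : ℕ)), x i ^ q
      ≤ (1 - ((m : ℝ) + 1) * x ⟨m, hmn⟩ ^ p) * (x ⟨m, hmn⟩ ^ p) ^ (q / p - 1) :=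
  tail_sum_rpow_le_general p q hp hpq m n hmn x hx1 hx2 hsum
end

section
/- Let 1 ≤ p < q < ∞ be real numbers and 1 ≤ m < n integers. Let x ∈ ℝ^n satisfy x_1 ≥ x_2 ≥ ⋯ ≥ x_n ≥ 0 and x_1^p + ⋯ + x_n^p ≤ 1. Then (m+1)·x_{m+1}^q + x_{m+2}^q + ⋯ + x_n^q ≤ (1/(m+1))^{q/p − 1}. Equivalently, ((m+1)·x_{m+1}^q + Σ_{k=m+2}^n x_k^q)^{1/q} ≤ (1/(m+1))^{1/p − 1/q}. -/
/-!
Put `a = x_{m+1}` and `y_i = min x_i a`, i.e. `y = x - f(x)`; by sortedness the left-hand side is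
`∑ y_i ^ q`. Since `0 ≤ y_i ≤ a`, `∑ y_i ^ q ≤ a ^ (q - p) ∑ y_i ^ p ≤ a ^ (q - p) ∑ x_i ^ p ≤ a ^ (q - p)`,
and the `m + 1` first coordinates of `x` are at least `a`, so `(m + 1) a ^ p ≤ 1`.
-/

open Finset Real

theorem Real.rpow_le_rpow_sub_mul_rpow {y a p q : ℝ} (hy : 0 ≤ y) (hya : y ≤ a) (hpq : p ≤ q)
    (hq : q ≠ 0) : y ^ q ≤ a ^ (q - p) * y ^ p := by
  calc y ^ q = y ^ (q - p) * y ^ p := by rw [← rpow_add' hy (by simpa using hq), sub_add_cancel]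
    _ ≤ a ^ (q - p) * y ^ p := by gcongr

theorem Finset.sum_rpow_le_rpow_sub_mul_sum_rpow {ι : Type*} (s : Finset ι) {f : ι → ℝ}
    {a p q : ℝ} (hf : ∀ i ∈ s, 0 ≤ f i) (hfa : ∀ i ∈ s, f i ≤ a) (hpq : p ≤ q) (hq : q ≠ 0) :
    ∑ i ∈ s, f i ^ q ≤ a ^ (q - p) * ∑ i ∈ s, f i ^ p := by
  rw [mul_sum]
  exact sum_le_sum fun i hi => rpow_le_rpow_sub_mul_rpow (hf i hi) (hfa i hi) hpq hq

theorem Real.rpow_sub_le_of_rpow_le {a c p q : ℝ} (ha : 0 ≤ a) (hp : 0 < p) (hpq : p ≤ q)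
    (hac : a ^ p ≤ c) : a ^ (q - p) ≤ c ^ (q / p - 1) := by
  have hexp : p * (q / p - 1) = q - p := by field_simp
  rw [← hexp, rpow_mul ha]
  gcongr
  rwa [sub_nonneg, le_div_iff₀ hp, one_mul]

theorem Antitone.sum_comp_min_eq {α : Type*} [LinearOrder α] {n : ℕ} {x : Fin n → α}
    (hx : Antitone x) (g : α → ℝ) (k : ℕ) (hk : k < n) :
    ∑ i, g (min (x i) (x ⟨k, hk⟩)) =
      ((k : ℝ) + 1) * g (x ⟨k, hk⟩)
        + ∑ i ∈ univ.filter (fun i : Fin n => k + 1 ≤ (i : ℕ)), g (x i) := by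
  rw [← sum_filter_not_add_sum_filter univ (fun i : Fin n => k + 1 ≤ (i : ℕ))]
  congr 1
  · have hhead : ∀ i ∈ univ.filter (fun i : Fin n => ¬ k + 1 ≤ (i : ℕ)),
        g (min (x i) (x ⟨k, hk⟩)) = g (x ⟨k, hk⟩) := by
      intro i hi
      rw [min_eq_right (hx (Fin.mk_le_mk.mpr (by simp only [mem_filter, mem_univ, true_and] at hi; omega)))]
    rw [sum_congr rfl hhead, sum_const, nsmul_eq_mul]
    simp only [not_le, Fin.card_filter_val_lt, min_eq_right (Nat.succ_le_of_lt hk)]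
    push_cast; ring
  · refine sum_congr rfl fun i hi => ?_
    rw [min_eq_left (hx (Fin.mk_le_mk.mpr (by simp only [mem_filter, mem_univ, true_and] at hi; omega)))]

open Finset in
theorem key_estimate_general (p q : ℝ) (hp : 1 ≤ p) (hpq : p < q)
    (m n : ℕ) (hmn : m < n)
    (x : Fin n → ℝ)
    (hx1 : ∀ i j : Fin n, i ≤ j → x j ≤ x i) (hx2 : ∀ i, 0 ≤ x i)
    (hsum : ∑ i, x i ^ p ≤ 1) :
    ((m : ℝ) + 1) * x ⟨m, hmn⟩ ^ q
        + ∑ i ∈ univ.filter (fun i : Fin n => m + 1 ≤ (i : ℕ)), x i ^ q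
      ≤ (1 / ((m : ℝ) + 1)) ^ (q / p - 1) ∧
    (((m : ℝ) + 1) * x ⟨m, hmn⟩ ^ q
        + ∑ i ∈ univ.filter (fun i : Fin n => m + 1 ≤ (i : ℕ)), x i ^ q) ^ (1 / q)
      ≤ (1 / ((m : ℝ) + 1)) ^ (1 / p - 1 / q) := by
  have hx : Antitone x := hx1
  set a := x ⟨m, hmn⟩
  rw [← hx.sum_comp_min_eq (· ^ q) m hmn]
  have hp0 : 0 < p := by linarith
  have hq0 : 0 < q := by linarith
  have hy : ∀ i, 0 ≤ min (x i) a := fun i => le_min (hx2 i) (hx2 _)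
  have hmass : ∑ i, min (x i) a ^ p ≤ 1 :=
    (sum_le_sum fun i _ => rpow_le_rpow (hy i) (min_le_left _ _) hp0.le).trans hsum
  have ha : a ^ p ≤ 1 / ((m : ℝ) + 1) := by
    rw [hx.sum_comp_min_eq (· ^ p) m hmn] at hmass
    have htail := sum_nonneg fun i (_ : i ∈ univ.filter (fun i : Fin n => m + 1 ≤ (i : ℕ))) =>
      rpow_nonneg (hx2 i) p
    rw [le_div_iff₀ (by positivity), mul_comm]
    linarith
  have hbound : ∑ i, min (x i) a ^ q ≤ (1 / ((m : ℝ) + 1)) ^ (q / p - 1) := calc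
    _ ≤ a ^ (q - p) * ∑ i, min (x i) a ^ p :=
      sum_rpow_le_rpow_sub_mul_sum_rpow _ (fun i _ => hy i) (fun i _ => min_le_right _ _)
        hpq.le hq0.ne'
    _ ≤ a ^ (q - p) := mul_le_of_le_one_right (rpow_nonneg (hx2 _) _) hmass
    _ ≤ _ := rpow_sub_le_of_rpow_le (hx2 _) hp0 hpq.le ha
  refine ⟨hbound, ?_⟩
  have hexp : (q / p - 1) * (1 / q) = 1 / p - 1 / q := by field_simp
  rw [← hexp, rpow_mul (by positivity)]
  exact rpow_le_rpow (sum_nonneg fun i _ => rpow_nonneg (hy i) q) hbound (by positivity)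

open Finset in
/-- Key estimate: for a sorted vector in the unit `ℓ^p`-ball,
`(m+1) x_{m+1}^q + x_{m+2}^q + ⋯ + x_n^q ≤ (1/(m+1))^{q/p - 1}`; equivalently, its
`q`-th root is at most `(1/(m+1))^{1/p - 1/q}`.
(Indices are 1-based in the informal statement; here `x ⟨m, hmn⟩` is `x_{m+1}`.) -/
theorem key_estimate (p q : ℝ) (hp : 1 ≤ p) (hpq : p < q)
    (m n : ℕ) (hm : 1 ≤ m) (hmn : m < n)
    (x : Fin n → ℝ)
    (hx1 : ∀ i j : Fin n, i ≤ j → x j ≤ x i) (hx2 : ∀ i, 0 ≤ x i)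
    (hsum : ∑ i, x i ^ p ≤ 1) :
    ((m : ℝ) + 1) * x ⟨m, hmn⟩ ^ q
        + ∑ i ∈ univ.filter (fun i : Fin n => m + 1 ≤ (i : ℕ)), x i ^ q
      ≤ (1 / ((m : ℝ) + 1)) ^ (q / p - 1) ∧
    (((m : ℝ) + 1) * x ⟨m, hmn⟩ ^ q
        + ∑ i ∈ univ.filter (fun i : Fin n => m + 1 ≤ (i : ℕ)), x i ^ q) ^ (1 / q)
      ≤ (1 / ((m : ℝ) + 1)) ^ (1 / p - 1 / q) :=
  key_estimate_general p q hp hpq m n hmn x hx1 hx2 hsum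
end

section
/- Let 1 ≤ p < q < ∞ be real numbers and 1 ≤ m < n integers. Then there exists a continuous map f : ℝ^n → ℝ^n such that: (i) for every x ∈ ℝ^n, at most m coordinates of f(x) are nonzero; (ii) for every x ∈ ℝ^n with ‖x‖_{ℓ^p} ≤ 1, ‖x − f(x)‖_{ℓ^q} ≤ (1/(m+1))^{1/p − 1/q}; and consequently (iii) for all x, y ∈ ℝ^n with ‖x‖_{ℓ^p} ≤ 1, ‖y‖_{ℓ^p} ≤ 1 and f(x) = f(y), one has ‖x − y‖_{ℓ^q} ≤ 2·(1/(m+1))^{1/p − 1/q}. -/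
/-!
Let `t` be the `(m+1)`-th largest of the `|xᵢ|` and soft-threshold `x` at `t`, i.e. move every
coordinate towards `0` by `t`, stopping at `0`. At most `m` coordinates survive, and `t` depends
continuously on `x`, so this map is continuous. The residual has coordinates `min |xᵢ| t`.
On the unit `ℓ^p`-ball `(m+1) tᵖ ≤ ∑ |xᵢ|ᵖ ≤ 1`, and `min (|xᵢ|, t)^q ≤ |xᵢ|ᵖ t^(q-p)`, so the
`ℓ^q`-norm of the residual is at most `t^(1-p/q) ≤ (m+1)^(-(1/p-1/q))`. The last claim follows
by the triangle inequality.
-/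

open Finset Real

noncomputable def clip (t x : ℝ) : ℝ := max (-t) (min t x)

lemma abs_clip {t : ℝ} (ht : 0 ≤ t) (x : ℝ) : |clip t x| = min |x| t := by
  unfold clip
  rcases le_total 0 x with hx | hx
  · rw [abs_of_nonneg hx, max_eq_right (by linarith [le_min ht hx]),
      abs_of_nonneg (le_min ht hx), min_comm]
  · rcases le_total x (-t) with hxt | hxt
    · rw [min_eq_right (by linarith), max_eq_left hxt, abs_neg, abs_of_nonneg ht,
        abs_of_nonpos hx, min_eq_right (by linarith)]
    · rw [min_eq_right (by linarith), max_eq_right hxt, abs_of_nonpos hx,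
        min_eq_left (by linarith)]

lemma clip_eq_self {t x : ℝ} (hx : |x| ≤ t) : clip t x = x := by
  obtain ⟨h₁, h₂⟩ := abs_le.1 hx
  rw [clip, min_eq_right h₂, max_eq_right h₁]

@[fun_prop]
lemma Continuous.clip {X : Type*} [TopologicalSpace X] {f g : X → ℝ} (hf : Continuous f)
    (hg : Continuous g) : Continuous fun x => clip (f x) (g x) :=
  hf.neg.max (hf.min hg)

lemma min_rpow_le_rpow_mul_rpow {a t p q : ℝ} (ha : 0 ≤ a) (ht : 0 ≤ t) (hp : 0 < p)
    (hpq : p ≤ q) : min a t ^ q ≤ a ^ p * t ^ (q - p) := by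
  have hmin : 0 ≤ min a t := le_min ha ht
  calc min a t ^ q = min a t ^ p * min a t ^ (q - p) := by
        rw [← rpow_add' hmin (by linarith)]; ring_nf
    _ ≤ a ^ p * t ^ (q - p) :=
        mul_le_mul (rpow_le_rpow hmin (min_le_left a t) hp.le)
          (rpow_le_rpow hmin (min_le_right a t) (by linarith)) (rpow_nonneg hmin _)
          (rpow_nonneg ha p)

section NthLargest

variable {ι : Type*} [Fintype ι] {m : ℕ}

lemma nonempty_subsets_card_eq (h : m < Fintype.card ι) :
    Nonempty {S : Finset ι // #S = m + 1} :=
  have ⟨S, _, hS⟩ := exists_subset_card_eq (s := (univ : Finset ι)) (by simpa using h)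
  ⟨⟨S, hS⟩⟩

/-- The `(m+1)`-th largest value of `a`, written as a max–min so that it is visibly
continuous in `a`. -/
noncomputable def nthLargest (h : m < Fintype.card ι) (a : ι → ℝ) : ℝ :=
  have := nonempty_subsets_card_eq h
  (univ : Finset {S : Finset ι // #S = m + 1}).sup' univ_nonempty
    fun S => S.1.inf' (card_pos.1 (m.succ_pos.trans_eq S.2.symm)) a

variable (h : m < Fintype.card ι) (a : ι → ℝ)

lemma continuous_nthLargest : Continuous (nthLargest h) :=
  have := nonempty_subsets_card_eq h
  Continuous.finset_sup'_apply univ_nonempty fun _ _ =>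
    Continuous.finset_inf'_apply _ fun i _ => continuous_apply i

lemma card_lt_nthLargest_le : #{i | nthLargest h a < a i} ≤ m := by
  by_contra! hcard
  obtain ⟨S, hS, hScard⟩ := exists_subset_card_eq (Nat.succ_le_of_lt hcard)
  have hne : S.Nonempty := card_pos.1 (m.succ_pos.trans_eq hScard.symm)
  have hle : S.inf' hne a ≤ nthLargest h a :=
    le_sup' (fun S : {S : Finset ι // #S = m + 1} => S.1.inf' _ a) (mem_univ ⟨S, hScard⟩)
  obtain ⟨i, hi, hmin⟩ := exists_mem_eq_inf' hne a
  exact (mem_filter.1 (hS hi)).2.not_ge (hmin ▸ hle)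

lemma succ_le_card_nthLargest_le : m + 1 ≤ #{i | nthLargest h a ≤ a i} := by
  have := nonempty_subsets_card_eq h
  obtain ⟨⟨S, hS⟩, -, hmax⟩ := exists_mem_eq_sup' univ_nonempty
    fun S : {S : Finset ι // #S = m + 1} =>
      S.1.inf' (card_pos.1 (m.succ_pos.trans_eq S.2.symm)) a
  have ht : nthLargest h a = S.inf' _ a := hmax
  calc m + 1 = #S := hS.symm
    _ ≤ #{i | nthLargest h a ≤ a i} := card_le_card fun i hi =>
        mem_filter.2 ⟨mem_univ i, ht.trans_le (inf'_le a hi)⟩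

lemma nthLargest_nonneg (ha : 0 ≤ a) : 0 ≤ nthLargest h a := by
  obtain ⟨i, hi⟩ : ∃ i, a i ≤ nthLargest h a := by
    by_contra! hall
    have := card_lt_nthLargest_le h a
    simp only [hall, filter_true, card_univ] at this
    omega
  exact (ha i).trans hi

lemma succ_mul_rpow_nthLargest_le_sum (ha : 0 ≤ a) {p : ℝ} (hp : 0 ≤ p) :
    (m + 1) * nthLargest h a ^ p ≤ ∑ i, a i ^ p := by
  set t := nthLargest h a
  calc (m + 1) * t ^ p ≤ #{i | t ≤ a i} * t ^ p := by
        gcongr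
        · exact rpow_nonneg (nthLargest_nonneg h a ha) p
        · exact_mod_cast succ_le_card_nthLargest_le h a
    _ = ∑ i ∈ {i | t ≤ a i}, t ^ p := by rw [sum_const, nsmul_eq_mul]
    _ ≤ ∑ i ∈ {i | t ≤ a i}, a i ^ p :=
        sum_le_sum fun i hi => rpow_le_rpow (nthLargest_nonneg h a ha) (mem_filter.1 hi).2 hp
    _ ≤ ∑ i, a i ^ p :=
        sum_le_sum_of_subset_of_nonneg (subset_univ _) fun i _ _ => rpow_nonneg (ha i) p

end NthLargest

lemma Lp_sub_le {ι : Type*} (s : Finset ι) (f g : ι → ℝ) {p : ℝ} (hp : 1 ≤ p) :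
    (∑ i ∈ s, |f i - g i| ^ p) ^ (1 / p) ≤
      (∑ i ∈ s, |f i| ^ p) ^ (1 / p) + (∑ i ∈ s, |g i| ^ p) ^ (1 / p) := by
  simpa [sub_eq_add_neg] using Lp_add_le s f (-g) hp

section SparseApprox

variable {ι : Type*} [Fintype ι] {m : ℕ} (h : m < Fintype.card ι)

noncomputable def sparseApprox (x : ι → ℝ) : ι → ℝ :=
  fun i => x i - clip (nthLargest h (|x ·|)) (x i)

lemma continuous_sparseApprox : Continuous (sparseApprox h) := by
  have := continuous_nthLargest h
  unfold sparseApprox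
  fun_prop

lemma ncard_support_sparseApprox_le (x : ι → ℝ) :
    {i | sparseApprox h x i ≠ 0}.ncard ≤ m := by
  calc {i | sparseApprox h x i ≠ 0}.ncard
      ≤ (({i | nthLargest h (|x ·|) < |x i|} : Finset ι) : Set ι).ncard := by
        refine Set.ncard_le_ncard (fun i hi => ?_) (Set.toFinite _)
        simp only [coe_filter, mem_univ, true_and, Set.mem_ofPred_eq]
        by_contra! hle
        exact hi (by rw [sparseApprox, clip_eq_self hle, sub_self])
    _ ≤ m := by
        rw [Set.ncard_coe_finset]
        exact card_lt_nthLargest_le h _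

lemma abs_sub_sparseApprox (x : ι → ℝ) (i : ι) :
    |x i - sparseApprox h x i| = min |x i| (nthLargest h (|x ·|)) := by
  rw [sparseApprox, sub_sub_cancel, abs_clip (nthLargest_nonneg h _ fun i => abs_nonneg (x i))]

lemma lq_dist_sparseApprox_le {p q : ℝ} (hp : 0 < p) (hpq : p ≤ q) (x : ι → ℝ)
    (hx : (∑ i, |x i| ^ p) ^ (1 / p) ≤ 1) :
    (∑ i, |x i - sparseApprox h x i| ^ q) ^ (1 / q) ≤ (1 / ((m : ℝ) + 1)) ^ (1 / p - 1 / q) := by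
  simp_rw [abs_sub_sparseApprox]
  set t := nthLargest h (|x ·|)
  have hq : 0 < q := hp.trans_le hpq
  have ht : 0 ≤ t := nthLargest_nonneg h _ fun i => abs_nonneg (x i)
  have hx : ∑ i, |x i| ^ p ≤ 1 := by
    rwa [one_div, rpow_inv_le_iff_of_pos (sum_nonneg fun i _ => by positivity) zero_le_one hp,
      one_rpow] at hx
  have htp : t ^ p ≤ 1 / ((m : ℝ) + 1) := by
    rw [le_div_iff₀ (by positivity), mul_comm]
    exact (succ_mul_rpow_nthLargest_le_sum h _ (fun i => abs_nonneg (x i)) hp.le).trans hx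
  have hsum : ∑ i, min |x i| t ^ q ≤ t ^ (q - p) :=
    calc ∑ i, min |x i| t ^ q ≤ ∑ i, |x i| ^ p * t ^ (q - p) :=
          sum_le_sum fun i _ => min_rpow_le_rpow_mul_rpow (abs_nonneg _) ht hp hpq
      _ ≤ t ^ (q - p) := by
          rw [← sum_mul]
          exact mul_le_of_le_one_left (rpow_nonneg ht _) hx
  calc (∑ i, min |x i| t ^ q) ^ (1 / q)
      ≤ (t ^ (q - p)) ^ (1 / q) :=
        rpow_le_rpow (sum_nonneg fun i _ => by positivity) hsum (by positivity)
    _ = (t ^ p) ^ (1 / p - 1 / q) := by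
        rw [← rpow_mul ht, ← rpow_mul ht]
        congr 1
        field_simp
    _ ≤ (1 / ((m : ℝ) + 1)) ^ (1 / p - 1 / q) :=
        rpow_le_rpow (rpow_nonneg ht p) htp (sub_nonneg.2 (one_div_le_one_div_of_le hp hpq))

end SparseApprox

theorem exists_eps_embedding_lq_general (p q : ℝ) (hp : 1 ≤ p) (hpq : p < q)
    (m n : ℕ) (hmn : m < n) :
    ∃ f : (Fin n → ℝ) → (Fin n → ℝ), Continuous f ∧
      (∀ x : Fin n → ℝ, {i : Fin n | f x i ≠ 0}.ncard ≤ m) ∧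
      (∀ x : Fin n → ℝ, (∑ i, |x i| ^ p) ^ (1 / p) ≤ 1 →
        (∑ i, |x i - f x i| ^ q) ^ (1 / q) ≤ (1 / ((m : ℝ) + 1)) ^ (1 / p - 1 / q)) ∧
      (∀ x y : Fin n → ℝ, (∑ i, |x i| ^ p) ^ (1 / p) ≤ 1 →
        (∑ i, |y i| ^ p) ^ (1 / p) ≤ 1 → f x = f y →
        (∑ i, |x i - y i| ^ q) ^ (1 / q) ≤ 2 * (1 / ((m : ℝ) + 1)) ^ (1 / p - 1 / q)) := by
  have h : m < Fintype.card (Fin n) := by simpa using hmn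
  set f := sparseApprox h
  have hdist := lq_dist_sparseApprox_le h (zero_lt_one.trans_le hp) hpq.le
  refine ⟨f, continuous_sparseApprox h, ncard_support_sparseApprox_le h, hdist, ?_⟩
  intro x y hx hy hxy
  calc (∑ i, |x i - y i| ^ q) ^ (1 / q)
      = (∑ i, |(x i - f x i) - (y i - f y i)| ^ q) ^ (1 / q) := by simp [hxy]
    _ ≤ (∑ i, |x i - f x i| ^ q) ^ (1 / q) + (∑ i, |y i - f y i| ^ q) ^ (1 / q) :=
        Lp_sub_le univ _ _ (hp.trans hpq.le)
    _ ≤ 2 * (1 / ((m : ℝ) + 1)) ^ (1 / p - 1 / q) := by linarith [hdist x hx, hdist y hy]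

/-- Main construction: there is a continuous map `f : ℝ^n → ℝ^n` whose image lies in the
union of the `m`-dimensional coordinate subspaces and which moves each point of the unit
`ℓ^p`-ball by at most `(1/(m+1))^{1/p - 1/q}` in the `ℓ^q`-distance; consequently it is a
`2(1/(m+1))^{1/p - 1/q}`-embedding of the ball with respect to the `ℓ^q`-distance. -/
theorem exists_eps_embedding_lq (p q : ℝ) (hp : 1 ≤ p) (hpq : p < q)
    (m n : ℕ) (hm : 1 ≤ m) (hmn : m < n) :
    ∃ f : (Fin n → ℝ) → (Fin n → ℝ), Continuous f ∧
      (∀ x : Fin n → ℝ, {i : Fin n | f x i ≠ 0}.ncard ≤ m) ∧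
      (∀ x : Fin n → ℝ, (∑ i, |x i| ^ p) ^ (1 / p) ≤ 1 →
        (∑ i, |x i - f x i| ^ q) ^ (1 / q) ≤ (1 / ((m : ℝ) + 1)) ^ (1 / p - 1 / q)) ∧
      (∀ x y : Fin n → ℝ, (∑ i, |x i| ^ p) ^ (1 / p) ≤ 1 →
        (∑ i, |y i| ^ p) ^ (1 / p) ≤ 1 → f x = f y →
        (∑ i, |x i - y i| ^ q) ^ (1 / q) ≤ 2 * (1 / ((m : ℝ) + 1)) ^ (1 / p - 1 / q)) :=
  exists_eps_embedding_lq_general p q hp hpq m n hmn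
end
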